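/- arXiv:0912.0962 — 2 statements merged into one kernel-verified Lean document; each statement's English description precedes it below -/
import Mathlib

section
/- Let ν be a random variable on [0,1] with probability density f_ν(ν) = ∑_{i=0}^{N} ∑_{j=1}^{i(M-1)} C(N,i) C(i(M-1),j) (-1)^{i+j} j ν^{j-1}, where N ≥ 1 and M ≥ 2 are integers. Then E[ln ν] = ∑_{i=0}^{N} C(N,i) (-1)^i ∑_{l=1}^{i(M-1)} 1/l. -/
/-!
Expanding the density, `E[ln ν]` is a finite combination of the moments
`∫₀¹ ln ν · ν^(j-1) dν = -1/j²`. For fixed `m = i(M-1)` the inner sum then collapses by the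
alternating binomial identity `∑_{j=1}^m C(m,j) (-1)^j / j = -H_m`, which follows by induction
on `m` from Pascal's rule in the form `C(m+1,j)/j = C(m,j)/j + C(m+1,j)/(m+1)` together with
`∑_{j=1}^{m+1} C(m+1,j) (-1)^j = -1`.
-/

open Finset Real intervalIntegral Filter Topology

lemma sum_Icc_one_choose_mul_neg_one_pow {n : ℕ} (hn : n ≠ 0) :
    ∑ j ∈ Icc 1 n, (n.choose j : ℝ) * (-1) ^ j = -1 := by
  have h := Int.alternating_sum_range_choose_of_ne hn
  rw [← Nat.Ico_zero_eq_range, Ico_add_one_right_eq_Icc,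
    ← insert_Icc_add_one_left_eq_Icc n.zero_le, sum_insert (by simp)] at h
  have h' : ((1 + ∑ j ∈ Icc 1 n, (-1) ^ j * (n.choose j : ℤ) : ℤ) : ℝ) = 0 := by
    simpa using congrArg (Int.cast : ℤ → ℝ) h
  push_cast at h'
  simp_rw [mul_comm (n.choose _ : ℝ)]
  linarith

lemma choose_succ_mul_neg_one_pow_div {n j : ℕ} (hj : j ≠ 0) (hjn : j ≤ n + 1) :
    ((n + 1).choose j : ℝ) * (-1) ^ j / j
      = (n.choose j : ℝ) * (-1) ^ j / j + ((n + 1).choose j : ℝ) * (-1) ^ j / (n + 1) := by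
  have h : (n.choose j : ℝ) * (n + 1) = ((n + 1).choose j : ℝ) * (n + 1 - j) := by
    exact_mod_cast Nat.choose_mul_succ_eq n j
  have hj' : (j : ℝ) ≠ 0 := by exact_mod_cast hj
  field_simp
  linear_combination -h

lemma sum_Icc_choose_mul_neg_one_pow_div (n : ℕ) :
    ∑ j ∈ Icc 1 n, (n.choose j : ℝ) * (-1) ^ j / j = -∑ l ∈ Icc 1 n, (1 : ℝ) / l := by
  induction n with
  | zero => simp
  | succ n ih =>
    have hsplit := sum_congr rfl fun j (hj : j ∈ Icc 1 (n + 1)) =>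
      choose_succ_mul_neg_one_pow_div (n := n)
        (by have := (mem_Icc.1 hj).1; omega) (mem_Icc.1 hj).2
    rw [hsplit, sum_add_distrib, ← sum_div, sum_Icc_one_choose_mul_neg_one_pow n.succ_ne_zero,
      sum_Icc_succ_top (by omega), Nat.choose_succ_self, ih, sum_Icc_succ_top (by omega)]
    push_cast
    ring

lemma integral_log_mul_pow (n : ℕ) :
    ∫ x in (0 : ℝ)..1, log x * x ^ n = -1 / (n + 1) ^ 2 := by
  let F : ℝ → ℝ := fun x => x ^ (n + 1) * (log x / (n + 1) - 1 / (n + 1) ^ 2)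
  have hderiv : ∀ x ∈ Set.Ioo (0 : ℝ) 1, HasDerivAt F (log x * x ^ n) x := by
    intro x hx
    have hx0 : x ≠ 0 := hx.1.ne'
    refine ((hasDerivAt_pow (n + 1) x).fun_mul
      (((hasDerivAt_log hx0).div_const ((n : ℝ) + 1)).sub_const
        (1 / ((n : ℝ) + 1) ^ 2))).congr_deriv ?_
    field_simp
    push_cast
    ring
  have hzero : Tendsto F (𝓝[>] 0) (𝓝 0) := by
    have hlog : Tendsto (fun x : ℝ => log x * x ^ (n + 1)) (𝓝[>] 0) (𝓝 0) := by
      simpa [← rpow_natCast] using tendsto_log_mul_rpow_nhdsGT_zero (r := n + 1) (by positivity)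
    have hpow : Tendsto (fun x : ℝ => x ^ (n + 1)) (𝓝[>] 0) (𝓝 0) := by
      simpa using ((continuous_pow (n + 1)).tendsto (0 : ℝ)).mono_left nhdsWithin_le_nhds
    convert (hlog.div_const ((n : ℝ) + 1)).sub (hpow.div_const (((n : ℝ) + 1) ^ 2)) using 2
    · simp only [F]; ring
    · simp
  have hone : Tendsto F (𝓝[<] 1) (𝓝 (-1 / (n + 1) ^ 2)) := by
    have : ContinuousAt F 1 := by fun_prop (disch := norm_num)
    convert this.tendsto.mono_left nhdsWithin_le_nhds using 2
    simp [F]; ring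
  rw [integral_eq_sub_of_hasDerivAt_of_tendsto zero_lt_one hderiv
    (intervalIntegrable_log'.mul_continuousOn (continuous_pow n).continuousOn) hzero hone, sub_zero]

lemma integral_log_mul_sum_choose (m : ℕ) :
    ∫ x in (0 : ℝ)..1, log x * ∑ j ∈ Icc 1 m, (m.choose j : ℝ) * (-1) ^ j * j * x ^ (j - 1)
      = ∑ l ∈ Icc 1 m, (1 : ℝ) / l := by
  have hterm : ∀ j ∈ Icc 1 m,
      ∫ x in (0 : ℝ)..1, log x * ((m.choose j : ℝ) * (-1) ^ j * j * x ^ (j - 1))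
        = -((m.choose j : ℝ) * (-1) ^ j / j) := by
    intro j hj
    obtain ⟨k, rfl⟩ : ∃ k, j = k + 1 := ⟨j - 1, by have := (mem_Icc.1 hj).1; omega⟩
    simp_rw [mul_left_comm (log _), integral_const_mul, Nat.add_sub_cancel, integral_log_mul_pow]
    push_cast
    field_simp
  simp_rw [mul_sum]
  rw [integral_finsetSum, sum_congr rfl hterm, sum_neg_distrib,
    sum_Icc_choose_mul_neg_one_pow_div, neg_neg]
  exact fun j _ => intervalIntegrable_log'.mul_continuousOn (by fun_prop)

theorem stmt1_general (N M : ℕ)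
    (f : ℝ → ℝ)
    (hf : ∀ x : ℝ, f x = ∑ i ∈ range (N + 1), ∑ j ∈ Icc 1 (i * (M - 1)),
      (N.choose i : ℝ) * ((i * (M - 1)).choose j : ℝ) * (-1) ^ (i + j) * j * x ^ (j - 1)) :
    ∫ x in Set.Ioo (0:ℝ) 1, Real.log x * f x
      = ∑ i ∈ range (N + 1), (N.choose i : ℝ) * (-1) ^ i *
          ∑ l ∈ Icc 1 (i * (M - 1)), (1 : ℝ) / l := by
  have hsplit : ∀ x, log x * f x = ∑ i ∈ range (N + 1), (N.choose i : ℝ) * (-1) ^ i *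
      (log x * ∑ j ∈ Icc 1 (i * (M - 1)),
        ((i * (M - 1)).choose j : ℝ) * (-1) ^ j * j * x ^ (j - 1)) := by
    intro x
    simp_rw [hf, mul_sum]
    refine sum_congr rfl fun i _ => sum_congr rfl fun j _ => ?_
    ring
  rw [← MeasureTheory.integral_Ioc_eq_integral_Ioo, ← integral_of_le zero_le_one,
    integral_congr fun x _ => hsplit x, integral_finsetSum]
  · simp_rw [integral_const_mul, integral_log_mul_sum_choose]
  · exact fun i _ => (intervalIntegrable_log'.mul_continuousOn (by fun_prop)).const_mul _

theorem stmt1 (N M : ℕ) (hN : 1 ≤ N) (hM : 2 ≤ M)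
    (f : ℝ → ℝ)
    (hf : ∀ x : ℝ, f x = ∑ i ∈ range (N + 1), ∑ j ∈ Icc 1 (i * (M - 1)),
      (N.choose i : ℝ) * ((i * (M - 1)).choose j : ℝ) * (-1) ^ (i + j) * j * x ^ (j - 1)) :
    ∫ x in Set.Ioo (0:ℝ) 1, Real.log x * f x
      = ∑ i ∈ range (N + 1), (N.choose i : ℝ) * (-1) ^ i *
          ∑ l ∈ Icc 1 (i * (M - 1)), (1 : ℝ) / l :=
  stmt1_general N M f hf
end

section
/- With N = 2^B ≥ 1 and number of antennas M ≥ 2, if ν = cos²(∠(g̃, ĝ)) has the RVQ density f_ν(ν) = ∑_{i=0}^{N} ∑_{j=1}^{i(M-1)} C(N,i) C(i(M-1),j) (-1)^{i+j} j ν^{j-1} on [0,1], then E[1 − ν] = N · β(N, M/(M−1)), where β denotes the Beta function. -/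
/-!
With m = M - 1, integrating the monomials against 1 - x turns the left side into
Σᵢ Σⱼ C(N,i) C(im,j) (-1)^(i+j) / (j+1). The inner sum is 1/(im+1) - 1, and the constants -1
cancel because Σᵢ (-1)^i C(N,i) = 0 for N ≥ 1. What remains is a Beta value:
Σᵢ (-1)^i C(N,i) / (x+i) = N! Γ(x) / Γ(x+N+1) by Pascal's rule and Γ(s+1) = s Γ(s), and at
x = 1/m this is N Γ(N) Γ(1 + 1/m) / Γ(N + 1 + 1/m), where 1 + 1/m = M/(M-1).
-/

open Finset
open scoped Nat

theorem integral_one_sub_mul_deriv_pow {n : ℕ} (hn : n ≠ 0) :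
    ∫ x in (0 : ℝ)..1, (1 - x) * (n * x ^ (n - 1)) = 1 / (n + 1) := by
  obtain ⟨k, rfl⟩ := Nat.exists_eq_add_one_of_ne_zero hn
  have hexpand : ∀ x : ℝ, (1 - x) * ((k + 1 : ℕ) * x ^ (k + 1 - 1))
      = (k + 1) * x ^ k - (k + 1) * x ^ (k + 1) := fun x ↦ by push_cast; ring
  simp only [hexpand]
  rw [intervalIntegral.integral_sub ((intervalIntegral.intervalIntegrable_pow _).const_mul _)
    ((intervalIntegral.intervalIntegrable_pow _).const_mul _), intervalIntegral.integral_const_mul,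
    intervalIntegral.integral_const_mul, integral_pow, integral_pow]
  push_cast
  field_simp
  ring

theorem integral_Ioo_one_sub_mul_sum {ι : Type*} (s : Finset ι) (c : ι → ℝ) (d : ι → ℕ)
    (hd : ∀ i ∈ s, d i ≠ 0) :
    ∫ x in Set.Ioo (0 : ℝ) 1, (1 - x) * ∑ i ∈ s, c i * d i * x ^ (d i - 1)
      = ∑ i ∈ s, c i / (d i + 1) := by
  rw [← MeasureTheory.integral_Ioc_eq_integral_Ioo,
    ← intervalIntegral.integral_of_le zero_le_one]
  simp_rw [mul_sum]
  rw [intervalIntegral.integral_finsetSum fun i _ ↦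
    (by fun_prop : Continuous _).intervalIntegrable _ _]
  refine sum_congr rfl fun i hi ↦ ?_
  have hterm : ∀ x : ℝ, (1 - x) * (c i * d i * x ^ (d i - 1))
      = c i * ((1 - x) * (d i * x ^ (d i - 1))) := fun x ↦ by ring
  simp only [hterm]
  rw [intervalIntegral.integral_const_mul, integral_one_sub_mul_deriv_pow (hd i hi), mul_one_div]

theorem sum_neg_one_pow_mul_choose_div_add (N : ℕ) {x : ℝ} (hx : 0 < x) :
    ∑ i ∈ range (N + 1), (-1) ^ i * (N.choose i : ℝ) / (x + i)
      = N ! * Real.Gamma x / Real.Gamma (x + N + 1) := by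
  induction N generalizing x with
  | zero =>
    have hΓ := (Real.Gamma_pos_of_pos hx).ne'
    simp [Real.Gamma_add_one hx.ne']
    field_simp
  | succ N ih =>
    calc ∑ i ∈ range (N + 2), (-1) ^ i * ((N + 1).choose i : ℝ) / (x + i)
        = ∑ i ∈ range (N + 2), ((N + 1).choose i : ℝ) * ((-1) ^ i / (x + i)) :=
          sum_congr rfl fun _ _ ↦ by ring
      _ = ∑ i ∈ range (N + 1), (N.choose i : ℝ) * ((-1) ^ i / (x + i)) +
            ∑ i ∈ range (N + 1), (N.choose i : ℝ) * ((-1) ^ (i + 1) / (x + (i + 1 : ℕ))) :=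
          sum_choose_succ_mul (fun i _ ↦ (-1) ^ i / (x + i)) N
      _ = ∑ i ∈ range (N + 1), (-1) ^ i * (N.choose i : ℝ) / (x + i) -
            ∑ i ∈ range (N + 1), (-1) ^ i * (N.choose i : ℝ) / (x + 1 + i) := by
          rw [sub_eq_add_neg, ← sum_neg_distrib]
          congr 1 <;> refine sum_congr rfl fun i _ ↦ ?_
          · ring
          · push_cast; ring
      _ = (N + 1)! * Real.Gamma x / Real.Gamma (x + (N + 1 : ℕ) + 1) := by
          have hy : 0 < x + N + 1 := by positivity
          have hΓ := (Real.Gamma_pos_of_pos hy).ne'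
          have hshift : x + 1 + N + 1 = x + (N + 1 : ℕ) + 1 := by push_cast; ring
          have hstep :
              Real.Gamma (x + (N + 1 : ℕ) + 1) = (x + N + 1) * Real.Gamma (x + N + 1) := by
            rw [← Real.Gamma_add_one hy.ne']; push_cast; ring_nf
          rw [ih hx, ih (by positivity), Real.Gamma_add_one hx.ne', hshift, hstep,
            Nat.factorial_succ]
          push_cast
          field_simp
          ring

theorem sum_Icc_neg_one_pow_mul_choose_div_add_one (n : ℕ) :
    ∑ j ∈ Icc 1 n, (-1) ^ j * (n.choose j : ℝ) / (j + 1) = 1 / (n + 1) - 1 := by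
  have h := sum_neg_one_pow_mul_choose_div_add n one_pos
  have hΓ : Real.Gamma (1 + n + 1) = (n + 1 : ℕ)! := by
    rw [← Real.Gamma_nat_eq_factorial]; push_cast; ring_nf
  rw [range_eq_Ico, sum_eq_sum_Ico_succ_bot n.succ_pos, zero_add, Nat.succ_eq_add_one,
    Ico_add_one_right_eq_Icc, Real.Gamma_one, hΓ, Nat.factorial_succ] at h
  simp only [pow_zero, Nat.choose_zero_right, Nat.cast_one, Nat.cast_zero, add_zero, div_one,
    mul_one] at h
  simp_rw [add_comm (1 : ℝ)] at h
  have hn : (n ! : ℝ) / ((n + 1) * n ! : ℕ) = 1 / (n + 1) := by push_cast; field_simp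
  linarith

theorem sum_range_sum_Icc_choose_mul_choose_div {N : ℕ} (hN : N ≠ 0) (m : ℕ) :
    ∑ i ∈ range (N + 1), ∑ j ∈ Icc 1 (i * m),
        (N.choose i : ℝ) * ((i * m).choose j : ℝ) * (-1) ^ (i + j) / (j + 1)
      = ∑ i ∈ range (N + 1), (-1) ^ i * (N.choose i : ℝ) / (i * m + 1) := by
  have hinner : ∀ i : ℕ, ∑ j ∈ Icc 1 (i * m),
        (N.choose i : ℝ) * ((i * m).choose j : ℝ) * (-1) ^ (i + j) / (j + 1)
      = (-1) ^ i * (N.choose i : ℝ) / (i * m + 1) - (-1) ^ i * (N.choose i : ℝ) := by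
    intro i
    calc _ = (-1) ^ i * (N.choose i : ℝ)
          * ∑ j ∈ Icc 1 (i * m), (-1) ^ j * ((i * m).choose j : ℝ) / (j + 1) := by
          rw [mul_sum]
          exact sum_congr rfl fun j _ ↦ by ring
      _ = _ := by
          rw [sum_Icc_neg_one_pow_mul_choose_div_add_one, Nat.cast_mul]
          ring
  have halt : ∑ i ∈ range (N + 1), (-1) ^ i * (N.choose i : ℝ) = 0 := by
    exact_mod_cast Int.alternating_sum_range_choose_of_ne hN
  rw [sum_congr rfl fun i _ ↦ hinner i, sum_sub_distrib, halt, sub_zero]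

theorem sum_neg_one_pow_mul_choose_div_mul_add_one (N : ℕ) {m : ℝ} (hm : 0 < m) :
    ∑ i ∈ range (N + 1), (-1) ^ i * (N.choose i : ℝ) / (i * m + 1)
      = N ! * Real.Gamma (1 + 1 / m) / Real.Gamma (N + 1 + 1 / m) := by
  have hscale : ∀ i : ℕ, (-1) ^ i * (N.choose i : ℝ) / (i * m + 1)
      = 1 / m * ((-1) ^ i * (N.choose i : ℝ) / (1 / m + i)) := fun i ↦ by field_simp; ring
  rw [sum_congr rfl fun i _ ↦ hscale i, ← mul_sum,
    sum_neg_one_pow_mul_choose_div_add N (by positivity), add_comm 1 (1 / m),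
    Real.Gamma_add_one (one_div_pos.2 hm).ne',
    show (N : ℝ) + 1 + 1 / m = 1 / m + N + 1 by ring]
  ring

theorem stmt10 (B N M : ℕ) (hN : N = 2 ^ B) (hM : 2 ≤ M)
    (f : ℝ → ℝ)
    (hf : ∀ x : ℝ, f x = ∑ i ∈ range (N + 1), ∑ j ∈ Icc 1 (i * (M - 1)),
      (N.choose i : ℝ) * ((i * (M - 1)).choose j : ℝ) * (-1) ^ (i + j) * j * x ^ (j - 1)) :
    ∫ x in Set.Ioo (0:ℝ) 1, (1 - x) * f x
      = (N : ℝ) * (Real.Gamma N * Real.Gamma ((M : ℝ) / ((M : ℝ) - 1)) /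
          Real.Gamma ((N : ℝ) + (M : ℝ) / ((M : ℝ) - 1))) := by
  have hN0 : N ≠ 0 := hN ▸ pow_ne_zero B two_ne_zero
  have hm : (0 : ℝ) < (M - 1 : ℕ) := by norm_cast; omega
  have hexp : (M : ℝ) / (M - 1) = 1 + 1 / (M - 1 : ℕ) := by
    rw [Nat.cast_sub (by omega), Nat.cast_one] at hm ⊢
    field_simp; ring
  calc ∫ x in Set.Ioo (0:ℝ) 1, (1 - x) * f x
      = ∑ i ∈ range (N + 1), ∑ j ∈ Icc 1 (i * (M - 1)),
          (N.choose i : ℝ) * ((i * (M - 1)).choose j : ℝ) * (-1) ^ (i + j) / (j + 1) := by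
        simp_rw [hf, sum_sigma']
        rw [integral_Ioo_one_sub_mul_sum _ _ _ fun p hp ↦ ?_, sum_sigma]
        simp only [mem_sigma, mem_Icc] at hp
        omega
    _ = ∑ i ∈ range (N + 1), (-1) ^ i * (N.choose i : ℝ) / (i * (M - 1 : ℕ) + 1) :=
        sum_range_sum_Icc_choose_mul_choose_div hN0 _
    _ = N ! * Real.Gamma (1 + 1 / (M - 1 : ℕ)) / Real.Gamma (N + 1 + 1 / (M - 1 : ℕ)) :=
        sum_neg_one_pow_mul_choose_div_mul_add_one N hm
    _ = _ := by
        rw [hexp, ← add_assoc, ← Real.Gamma_nat_eq_factorial,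
          Real.Gamma_add_one (Nat.cast_ne_zero.2 hN0)]
        ring
end
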